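/- arXiv:2601.23000 — 2 statements merged into one kernel-verified Lean document; each statement's English description precedes it below -/
import Mathlib

section
/- Let θ, g ∈ ℝ^{d×m} with every column θ^{(j)} nonzero, let v be the column-wise tangent projection of g at θ with every column nonzero, and let v̂ be its column-normalization. If there is γ > 0 such that ‖v^{(j)}‖₂ ≥ γ ‖g^{(j)}‖₂ for every column j (i.e., the sine of the angle between g^{(j)} and θ^{(j)} is at least γ), then ⟨g, v̂⟩_F ≥ γ Σ_{j=1}^m ‖g^{(j)}‖₂ ≥ γ ‖g‖_F. -/
open scoped BigOperators

/-- Euclidean norm of the `j`-th column of a matrix. -/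
noncomputable def colNorm {d m : ℕ} (A : Matrix (Fin d) (Fin m) ℝ) (j : Fin m) : ℝ :=
  Real.sqrt (∑ i, A i j ^ 2)

/-- Euclidean inner product of the `j`-th columns of two matrices. -/
def colInner {d m : ℕ} (A B : Matrix (Fin d) (Fin m) ℝ) (j : Fin m) : ℝ :=
  ∑ i, A i j * B i j

/-- Column-normalization: each column is divided by its Euclidean norm. -/
noncomputable def colNormalize {d m : ℕ} (A : Matrix (Fin d) (Fin m) ℝ) :
    Matrix (Fin d) (Fin m) ℝ :=
  fun i j => A i j / colNorm A j

/-- Column-wise tangent projection of `g` at `θ`: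
`v^{(j)} = g^{(j)} − ⟨g^{(j)}, θ̂^{(j)}⟩ θ̂^{(j)}`. -/
noncomputable def tangentProj {d m : ℕ} (θ g : Matrix (Fin d) (Fin m) ℝ) :
    Matrix (Fin d) (Fin m) ℝ :=
  fun i j => g i j - colInner g (colNormalize θ) j * colNormalize θ i j

/-- Frobenius inner product. -/
def frobInner {d m : ℕ} (A B : Matrix (Fin d) (Fin m) ℝ) : ℝ :=
  ∑ i, ∑ j, A i j * B i j

/-- Frobenius norm. -/
noncomputable def frobNorm {d m : ℕ} (A : Matrix (Fin d) (Fin m) ℝ) : ℝ :=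
  Real.sqrt (∑ i, ∑ j, A i j ^ 2)

lemma colNorm_nonneg {d m : ℕ} (A : Matrix (Fin d) (Fin m) ℝ) (j : Fin m) :
    0 ≤ colNorm A j := Real.sqrt_nonneg _

lemma colNorm_pos {d m : ℕ} (A : Matrix (Fin d) (Fin m) ℝ) (j : Fin m)
    (h : (fun i => A i j) ≠ (0 : Fin d → ℝ)) : 0 < colNorm A j := by
  apply Real.sqrt_pos.2
  rcases Function.ne_iff.1 h with ⟨i, hi⟩
  have hi' : A i j ≠ 0 := hi
  have h1 : 0 < A i j ^ 2 := by positivity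
  have h2 : A i j ^ 2 ≤ ∑ k, A k j ^ 2 :=
    Finset.single_le_sum (f := fun k => A k j ^ 2) (fun k _ => sq_nonneg _) (Finset.mem_univ i)
  linarith

lemma sq_colNorm {d m : ℕ} (A : Matrix (Fin d) (Fin m) ℝ) (j : Fin m) :
    colNorm A j ^ 2 = ∑ i, A i j ^ 2 := by
  rw [colNorm, Real.sq_sqrt]
  positivity

/-- key: ⟨g^{(j)}, v^{(j)}⟩ = ‖v^{(j)}‖². -/
lemma colInner_tangentProj {d m : ℕ} (θ g : Matrix (Fin d) (Fin m) ℝ) (j : Fin m)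
    (hθ : (fun i => θ i j) ≠ (0 : Fin d → ℝ)) :
    colInner g (tangentProj θ g) j = colNorm (tangentProj θ g) j ^ 2 := by
  have hpos := colNorm_pos θ j hθ
  rw [sq_colNorm]
  show (∑ i, g i j * tangentProj θ g i j) = ∑ i, tangentProj θ g i j ^ 2
  simp only [tangentProj]
  set n : Fin d → ℝ := fun i => colNormalize θ i j with hn
  set c : ℝ := colInner g (colNormalize θ) j with hc
  have hcn : ∀ i, colNormalize θ i j = n i := fun i => rfl
  simp only [hcn]
  have hnn : ∑ i, n i * n i = 1 := by
    have : ∀ i, n i * n i = θ i j ^ 2 / colNorm θ j ^ 2 := by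
      intro i; simp only [hn, colNormalize]; ring
    rw [Finset.sum_congr rfl (fun i _ => this i), ← Finset.sum_div, ← sq_colNorm]
    exact div_self (pow_ne_zero 2 hpos.ne')
  have hgn : ∑ i, g i j * n i = c := by
    rw [hc]; rfl
  have expand : ∑ i, (g i j - c * n i) ^ 2
      = (∑ i, g i j * (g i j - c * n i)) - c * (∑ i, g i j * n i)
        + c ^ 2 * (∑ i, n i * n i) := by
    rw [Finset.mul_sum, Finset.mul_sum, ← Finset.sum_sub_distrib, ← Finset.sum_add_distrib]
    apply Finset.sum_congr rfl
    intro i _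
    ring
  rw [expand, hgn, hnn]
  ring

lemma sqrt_sum_le {m : ℕ} (f : Fin m → ℝ) (hf : ∀ j, 0 ≤ f j) :
    Real.sqrt (∑ j, f j) ≤ ∑ j, Real.sqrt (f j) := by
  have h2 : ∑ j, f j ≤ (∑ j, Real.sqrt (f j)) ^ 2 := by
    rw [sq, Finset.sum_mul]
    apply Finset.sum_le_sum
    intro j _
    calc f j = Real.sqrt (f j) * Real.sqrt (f j) := (Real.mul_self_sqrt (hf j)).symm
      _ ≤ Real.sqrt (f j) * ∑ k, Real.sqrt (f k) :=
          mul_le_mul_of_nonneg_left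
            (Finset.single_le_sum (fun k _ => Real.sqrt_nonneg (f k)) (Finset.mem_univ j))
            (Real.sqrt_nonneg _)
  calc Real.sqrt (∑ j, f j) ≤ Real.sqrt ((∑ j, Real.sqrt (f j)) ^ 2) := Real.sqrt_le_sqrt h2
    _ = ∑ j, Real.sqrt (f j) := Real.sqrt_sq (Finset.sum_nonneg fun j _ => Real.sqrt_nonneg _)

/-- key Lemma of Mano's convergence analysis: if
`‖v^{(j)}‖₂ ≥ γ ‖g^{(j)}‖₂` for every column `j` with `γ > 0`, then
`⟨g, v̂⟩_F ≥ γ Σ_j ‖g^{(j)}‖₂ ≥ γ ‖g‖_F`. -/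
theorem frobInner_colNormalize_tangentProj_lower_bound {d m : ℕ}
    (θ g : Matrix (Fin d) (Fin m) ℝ) (γ : ℝ) (hγ : 0 < γ)
    (hθ : ∀ j : Fin m, (fun i => θ i j) ≠ (0 : Fin d → ℝ))
    (hv : ∀ j : Fin m, (fun i => tangentProj θ g i j) ≠ (0 : Fin d → ℝ))
    (hsin : ∀ j : Fin m, γ * colNorm g j ≤ colNorm (tangentProj θ g) j) :
    γ * ∑ j, colNorm g j ≤ frobInner g (colNormalize (tangentProj θ g)) ∧
    γ * frobNorm g ≤ γ * ∑ j, colNorm g j := by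
  set v := tangentProj θ g with hvdef
  constructor
  · have h1 : frobInner g (colNormalize v) = ∑ j, colNorm v j := by
      rw [frobInner, Finset.sum_comm]
      apply Finset.sum_congr rfl
      intro j _
      have hpos := colNorm_pos v j (hv j)
      have : ∑ i, g i j * colNormalize v i j = (∑ i, g i j * v i j) / colNorm v j := by
        rw [Finset.sum_div]
        apply Finset.sum_congr rfl
        intro i _
        simp [colNormalize, mul_div_assoc]
      rw [this]
      have hkey : (∑ i, g i j * v i j) = colNorm v j ^ 2 := colInner_tangentProj θ g j (hθ j)
      rw [hkey, sq]
      field_simp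
    rw [h1, Finset.mul_sum]
    exact Finset.sum_le_sum fun j _ => hsin j
  · apply mul_le_mul_of_nonneg_left _ hγ.le
    rw [frobNorm, Finset.sum_comm]
    have : ∀ j : Fin m, colNorm g j = Real.sqrt (∑ i, g i j ^ 2) := fun j => rfl
    calc Real.sqrt (∑ j, ∑ i, g i j ^ 2)
        ≤ ∑ j, Real.sqrt (∑ i, g i j ^ 2) :=
          sqrt_sum_le _ (fun j => Finset.sum_nonneg fun i _ => sq_nonneg _)
      _ = ∑ j, colNorm g j := rfl
end

section
/- Let f : ℝ^{d×m} → ℝ be L-smooth and bounded below by f_inf, and let γ > 0. Let (θ_t)_{t=0}^{T+1} be the iterates of Mano without momentum with constant step size η > 0: g_t = ∇f(θ_t), v_t the column-wise tangent projection of g_t at θ_t, v̂_t its column-normalization, and θ_{t+1} = θ_t − η√m · v̂_t. Assume for all t ≤ T that every column of θ_t and of v_t is nonzero and that ‖v_t^{(j)}‖₂ ≥ γ ‖g_t^{(j)}‖₂ for every column j. Then (1/(T+1)) Σ_{t=0}^{T} ‖∇f(θ_t)‖_F ≤ (f(θ_0) − f_inf)/((T+1) m^{1/2} γ η) + L m^{3/2}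 η/(2γ). -/
open scoped BigOperators InnerProductSpace

/-- Euclidean norm of the `j`-th column of a matrix in
`ℝ^{d×m} = EuclideanSpace ℝ (Fin d × Fin m)`. -/
noncomputable def colNormE {d m : ℕ} (A : EuclideanSpace ℝ (Fin d × Fin m)) (j : Fin m) : ℝ :=
  Real.sqrt (∑ i, A (i, j) ^ 2)

/-- Column-normalization: each column is divided by its Euclidean norm. -/
noncomputable def colNormalizeE {d m : ℕ} (A : EuclideanSpace ℝ (Fin d × Fin m)) :
    EuclideanSpace ℝ (Fin d × Fin m) :=
  WithLp.toLp 2 (fun p => A p / colNormE A p.2)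

/-- Column-wise tangent projection of `g` at `θ`:
`v^{(j)} = g^{(j)} − ⟨g^{(j)}, θ̂^{(j)}⟩ θ̂^{(j)}` with `θ̂` the column-normalization of `θ`. -/
noncomputable def tangentProjE {d m : ℕ} (θ g : EuclideanSpace ℝ (Fin d × Fin m)) :
    EuclideanSpace ℝ (Fin d × Fin m) :=
  WithLp.toLp 2 (fun p => g p - (∑ i, g (i, p.2) * colNormalizeE θ (i, p.2)) * colNormalizeE θ p)

/-!
Write `g = ∇f(θ)`, `v` for its tangent projection and `v̂` for the column-normalization of `v`.
Since `v^{(j)}` is the orthogonal projection of `g^{(j)}`, `⟨g^{(j)}, v^{(j)}⟩ = ‖v^{(j)}‖²`,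
so `⟨g, v̂⟩ = Σ_j ‖v^{(j)}‖ ≥ γ Σ_j ‖g^{(j)}‖ ≥ γ ‖g‖_F`; and the step `η√m · v̂` has
Frobenius norm `η m` because `v̂` has `m` unit columns. The smoothness inequality therefore
makes every step decrease `f` by at least `η√m γ ‖g‖_F - L η² m² / 2`, and summing this
telescoping descent against `f ≥ f_inf` gives the bound.
-/

section Columns

variable {d m : ℕ}

lemma colNormE_sq (A : EuclideanSpace ℝ (Fin d × Fin m)) (j : Fin m) :
    colNormE A j ^ 2 = ∑ i, A (i, j) ^ 2 :=
  Real.sq_sqrt (Finset.sum_nonneg fun _ _ => sq_nonneg _)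

lemma norm_sq_eq_sum_colNormE_sq (A : EuclideanSpace ℝ (Fin d × Fin m)) :
    ‖A‖ ^ 2 = ∑ j, colNormE A j ^ 2 := by
  simp_rw [colNormE_sq, EuclideanSpace.norm_sq_eq, Real.norm_eq_abs, sq_abs]
  rw [Fintype.sum_prod_type, Finset.sum_comm]

lemma norm_le_sum_colNormE (A : EuclideanSpace ℝ (Fin d × Fin m)) :
    ‖A‖ ≤ ∑ j, colNormE A j := by
  have hcol : ∀ j ∈ Finset.univ, 0 ≤ colNormE A j := fun _ _ => Real.sqrt_nonneg _
  refine (pow_le_pow_iff_left₀ (norm_nonneg A) (Finset.sum_nonneg hcol) two_ne_zero).1 ?_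
  rw [norm_sq_eq_sum_colNormE_sq]
  exact Finset.sum_sq_le_sq_sum_of_nonneg hcol

lemma inner_eq_sum_sum (g w : EuclideanSpace ℝ (Fin d × Fin m)) :
    ⟪g, w⟫_ℝ = ∑ j, ∑ i, g (i, j) * w (i, j) := by
  simp only [PiLp.inner_apply, RCLike.inner_apply, conj_trivial]
  rw [Fintype.sum_prod_type, Finset.sum_comm]
  simp_rw [mul_comm]

lemma colNormE_colNormalizeE_sq (A : EuclideanSpace ℝ (Fin d × Fin m)) {j : Fin m}
    (hA : colNormE A j ≠ 0) : colNormE (colNormalizeE A) j ^ 2 = 1 := by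
  simp only [colNormE_sq, colNormalizeE, div_pow]
  rw [← Finset.sum_div, ← colNormE_sq]
  exact div_self (pow_ne_zero 2 hA)

lemma sum_mul_tangentProjE (θ g : EuclideanSpace ℝ (Fin d × Fin m)) (j : Fin m) :
    ∑ i, g (i, j) * tangentProjE θ g (i, j) = colNormE (tangentProjE θ g) j ^ 2 := by
  set u : Fin d → ℝ := fun i => colNormalizeE θ (i, j)
  set c := ∑ i, g (i, j) * u i
  have hv : ∀ i, tangentProjE θ g (i, j) = g (i, j) - c * u i := fun i => rfl
  -- `∑ g v - ∑ v² = c² (1 - ‖u‖²)`, and `u` is either a unit vector or zero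
  have hdefect : c ^ 2 * (1 - ∑ i, u i ^ 2) = 0 := by
    by_cases hθ : colNormE θ j = 0
    · have hc : c = 0 := Finset.sum_eq_zero fun i _ => by simp [u, colNormalizeE, hθ]
      simp [hc]
    · have hu : ∑ i, u i ^ 2 = 1 := by rw [← colNormE_colNormalizeE_sq θ hθ, colNormE_sq]
      simp [hu]
  rw [colNormE_sq, ← sub_eq_zero, ← Finset.sum_sub_distrib, ← hdefect]
  calc ∑ i, (g (i, j) * tangentProjE θ g (i, j) - tangentProjE θ g (i, j) ^ 2)
      = ∑ i, (c * (g (i, j) * u i) - c ^ 2 * u i ^ 2) :=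
        Finset.sum_congr rfl fun i _ => by rw [hv]; ring
    _ = c ^ 2 * (1 - ∑ i, u i ^ 2) := by
        rw [Finset.sum_sub_distrib, ← Finset.mul_sum, ← Finset.mul_sum]
        ring

lemma inner_colNormalizeE_tangentProjE (θ g : EuclideanSpace ℝ (Fin d × Fin m)) :
    ⟪g, colNormalizeE (tangentProjE θ g)⟫_ℝ = ∑ j, colNormE (tangentProjE θ g) j := by
  rw [inner_eq_sum_sum]
  refine Finset.sum_congr rfl fun j _ => ?_
  simp only [colNormalizeE, PiLp.toLp_apply, mul_div_assoc', ← Finset.sum_div]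
  rw [sum_mul_tangentProjE, sq, mul_self_div_self]

lemma norm_colNormalizeE_sq (A : EuclideanSpace ℝ (Fin d × Fin m))
    (hA : ∀ j, colNormE A j ≠ 0) : ‖colNormalizeE A‖ ^ 2 = m := by
  simp [norm_sq_eq_sum_colNormE_sq, colNormE_colNormalizeE_sq A (hA _)]

end Columns

lemma tangent_step_descent {d m : ℕ} {f : EuclideanSpace ℝ (Fin d × Fin m) → ℝ}
    {L γ η : ℝ} (hγ : 0 ≤ γ) (hη : 0 ≤ η)
    (hsmooth : ∀ x y : EuclideanSpace ℝ (Fin d × Fin m),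
      f y ≤ f x + ⟪gradient f x, y - x⟫_ℝ + L / 2 * ‖y - x‖ ^ 2)
    (θ : EuclideanSpace ℝ (Fin d × Fin m))
    (hv : ∀ j, colNormE (tangentProjE θ (gradient f θ)) j ≠ 0)
    (hsin : ∀ j,
      γ * colNormE (gradient f θ) j ≤ colNormE (tangentProjE θ (gradient f θ)) j) :
    η * Real.sqrt m * γ * ‖gradient f θ‖ ≤
      f θ - f (θ - (η * Real.sqrt m) • colNormalizeE (tangentProjE θ (gradient f θ))) +
        L / 2 * (η ^ 2 * m ^ 2) := by
  set g := gradient f θ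
  set v := tangentProjE θ g
  have hinner : ⟪g, -((η * Real.sqrt m) • colNormalizeE v)⟫_ℝ =
      -(η * Real.sqrt m * ∑ j, colNormE v j) := by
    rw [inner_neg_right, real_inner_smul_right, inner_colNormalizeE_tangentProjE]
  have hnorm : ‖-((η * Real.sqrt m) • colNormalizeE v)‖ ^ 2 = η ^ 2 * m ^ 2 := by
    rw [norm_neg, norm_smul, mul_pow, norm_colNormalizeE_sq v hv, Real.norm_eq_abs, sq_abs,
      mul_pow, Real.sq_sqrt (Nat.cast_nonneg m)]
    ring
  have hcos : γ * ‖g‖ ≤ ∑ j, colNormE v j :=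
    calc γ * ‖g‖ ≤ γ * ∑ j, colNormE g j :=
          mul_le_mul_of_nonneg_left (norm_le_sum_colNormE g) hγ
      _ = ∑ j, γ * colNormE g j := Finset.mul_sum _ _ _
      _ ≤ ∑ j, colNormE v j := Finset.sum_le_sum fun j _ => hsin j
  have hdesc := hsmooth θ (θ - (η * Real.sqrt m) • colNormalizeE v)
  rw [sub_sub_cancel_left, hinner, hnorm] at hdesc
  have := mul_le_mul_of_nonneg_left hcos (by positivity : 0 ≤ η * Real.sqrt m)
  linarith

lemma sum_range_le_of_le_sub_add {a F : ℕ → ℝ} {b c : ℝ} {T : ℕ}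
    (h : ∀ t ≤ T, a t ≤ F t - F (t + 1) + c) (hb : b ≤ F (T + 1)) :
    ∑ t ∈ Finset.range (T + 1), a t ≤ F 0 - b + (T + 1) * c :=
  calc ∑ t ∈ Finset.range (T + 1), a t
      ≤ ∑ t ∈ Finset.range (T + 1), (F t - F (t + 1) + c) :=
        Finset.sum_le_sum fun t ht => h t (Nat.lt_succ_iff.mp (Finset.mem_range.mp ht))
    _ = F 0 - F (T + 1) + (T + 1) * c := by
        rw [Finset.sum_add_distrib, Finset.sum_range_sub', Finset.sum_const, Finset.card_range,
          nsmul_eq_mul]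
        push_cast
        ring
    _ ≤ F 0 - b + (T + 1) * c := by linarith

theorem mano_average_gradient_bound_general {d m : ℕ} (L finf γ : ℝ) (hγ : 0 < γ) (T : ℕ)
    (f : EuclideanSpace ℝ (Fin d × Fin m) → ℝ)
    (hsmooth : ∀ x y : EuclideanSpace ℝ (Fin d × Fin m),
      f y ≤ f x + ⟪gradient f x, y - x⟫_ℝ + L / 2 * ‖y - x‖ ^ 2)
    (hbound : ∀ x, finf ≤ f x)
    (η : ℝ) (hη : 0 < η)
    (θ : ℕ → EuclideanSpace ℝ (Fin d × Fin m))
    (hupd : ∀ t ≤ T, θ (t + 1) =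
      θ t - (η * Real.sqrt m) • colNormalizeE (tangentProjE (θ t) (gradient f (θ t))))
    (hvcol : ∀ t ≤ T, ∀ j : Fin m,
      colNormE (tangentProjE (θ t) (gradient f (θ t))) j ≠ 0)
    (hsin : ∀ t ≤ T, ∀ j : Fin m,
      γ * colNormE (gradient f (θ t)) j ≤
        colNormE (tangentProjE (θ t) (gradient f (θ t))) j) :
    (1 / (T + 1 : ℝ)) * ∑ t ∈ Finset.range (T + 1), ‖gradient f (θ t)‖ ≤
      (f (θ 0) - finf) / ((T + 1 : ℝ) * Real.sqrt m * γ * η) +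
        L * ((m : ℝ) * Real.sqrt m) * η / (2 * γ) := by
  rcases Nat.eq_zero_or_pos m with rfl | hm
  · simp [EuclideanSpace.norm_eq]
  have hdescent : ∀ t ≤ T, η * Real.sqrt m * γ * ‖gradient f (θ t)‖ ≤
      f (θ t) - f (θ (t + 1)) + L / 2 * (η ^ 2 * m ^ 2) := fun t ht => by
    rw [hupd t ht]
    exact tangent_step_descent hγ.le hη.le hsmooth (θ t) (hvcol t ht) (hsin t ht)
  have hsum := sum_range_le_of_le_sub_add hdescent (hbound (θ (T + 1)))
  rw [← Finset.mul_sum] at hsum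
  have hsqrt : Real.sqrt m ^ 2 = m := Real.sq_sqrt (Nat.cast_nonneg m)
  have hsqrt_pos : 0 < Real.sqrt m := Real.sqrt_pos.2 (Nat.cast_pos.2 hm)
  rw [div_add_div _ _ (by positivity) (by positivity), le_div_iff₀ (by positivity)]
  field_simp
  linear_combination 2 * hsum - ((T + 1) * η ^ 2 * L * m) * hsqrt

/-- average-gradient bound for Mano without momentum: for `L`-smooth `f`
bounded below by `finf`, Mano iterates `θ_{t+1} = θ_t − η√m · v̂_t` (with `v̂_t` the
column-normalized tangent projection of `∇f(θ_t)` at `θ_t`), nonzero columns, and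
`‖v_t^{(j)}‖₂ ≥ γ‖g_t^{(j)}‖₂`, one has
`(1/(T+1)) Σ_t ‖∇f(θ_t)‖_F ≤ (f(θ_0) − finf)/((T+1) m^{1/2} γ η) + L m^{3/2} η/(2γ)`. -/
theorem mano_average_gradient_bound {d m : ℕ} (L finf γ : ℝ) (hγ : 0 < γ) (T : ℕ)
    (f : EuclideanSpace ℝ (Fin d × Fin m) → ℝ)
    (hdiff : Differentiable ℝ f)
    (hsmooth : ∀ x y : EuclideanSpace ℝ (Fin d × Fin m),
      f y ≤ f x + ⟪gradient f x, y - x⟫_ℝ + L / 2 * ‖y - x‖ ^ 2)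
    (hbound : ∀ x, finf ≤ f x)
    (η : ℝ) (hη : 0 < η)
    (θ : ℕ → EuclideanSpace ℝ (Fin d × Fin m))
    (hupd : ∀ t ≤ T, θ (t + 1) =
      θ t - (η * Real.sqrt m) • colNormalizeE (tangentProjE (θ t) (gradient f (θ t))))
    (hθcol : ∀ t ≤ T, ∀ j : Fin m, colNormE (θ t) j ≠ 0)
    (hvcol : ∀ t ≤ T, ∀ j : Fin m,
      colNormE (tangentProjE (θ t) (gradient f (θ t))) j ≠ 0)
    (hsin : ∀ t ≤ T, ∀ j : Fin m,
      γ * colNormE (gradient f (θ t)) j ≤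
        colNormE (tangentProjE (θ t) (gradient f (θ t))) j) :
    (1 / (T + 1 : ℝ)) * ∑ t ∈ Finset.range (T + 1), ‖gradient f (θ t)‖ ≤
      (f (θ 0) - finf) / ((T + 1 : ℝ) * Real.sqrt m * γ * η) +
        L * ((m : ℝ) * Real.sqrt m) * η / (2 * γ) :=
  mano_average_gradient_bound_general L finf γ hγ T f hsmooth hbound η hη θ hupd hvcol hsin
end
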